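/- arXiv:2304.09743 — 3 statements merged into one kernel-verified Lean document; each statement's English description precedes it below -/
import Mathlib

section
/- Let U be a finite set with |U| ≥ 2, let p ∈ U, let β ≥ 1, and let z be a nonnegative weight vector such that Σ_{E∈𝒞_S, p∉E} z_E > 0 for every S ⊆ U with |S| ≥ 2. Suppose that at every nondegenerate nonnegative weight vector, ∂f(U)/∂z_T ≤ β holds for every T ⊆ U with p ∈ T. Then f(U) ≤ β · ℓ(p) at z. -/
open Finset

variable {α : Type*} [Fintype α] [DecidableEq α]

/-- `E` crosses `S` if both `S ∩ E` and `S \ E` are nonempty. -/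
def Crosses (E S : Finset α) : Prop := (S ∩ E).Nonempty ∧ (S \ E).Nonempty

instance (E S : Finset α) : Decidable (Crosses E S) := by unfold Crosses; infer_instance

/-- The family of subsets of the ground set crossing `S`. -/
def crossers (S : Finset α) : Finset (Finset α) := univ.filter (fun E => Crosses E S)

/-- `ℓ(p)`: total weight of the sets containing `p`. -/
def ell (z : Finset α → ℝ) (p : α) : ℝ := ∑ E ∈ univ.filter (fun E => p ∈ E), z E

lemma card_sdiff_lt_of_mem_crossers {E S : Finset α} (h : E ∈ crossers S) :
    (S \ E).card < S.card := by
  have h' : Crosses E S := by unfold crossers at h; exact (mem_filter.mp h).2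
  obtain ⟨x, hx⟩ := h'.1
  refine card_lt_card ((ssubset_iff_of_subset sdiff_subset).mpr ?_)
  exact ⟨x, (mem_inter.mp hx).1, fun hmem => (mem_sdiff.mp hmem).2 (mem_inter.mp hx).2⟩

/-- The function `f(S)` from the Closest Point Process. -/
noncomputable def fval (z : Finset α → ℝ) (S : Finset α) : ℝ :=
  if S.card ≤ 1 then ∑ p ∈ S, ell z p
  else if 0 < ∑ E ∈ crossers S, z E then
    (∑ E ∈ (crossers S).attach, z E.1 * fval z (S \ E.1)) / (∑ E ∈ crossers S, z E)
  else 0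
termination_by S.card
decreasing_by exact card_sdiff_lt_of_mem_crossers E.2

/-- A weight vector is nondegenerate if every `S` with `|S| ≥ 2` has positive crossing weight. -/
def Nondeg (z : Finset α → ℝ) : Prop :=
  ∀ S : Finset α, 2 ≤ S.card → 0 < ∑ E ∈ crossers S, z E

/-- The partial derivative `∂f(S)/∂z_T`. -/
noncomputable def pderivf (S T : Finset α) (z : Finset α → ℝ) : ℝ :=
  fderiv ℝ (fun w : Finset α → ℝ => fval w S) z (Pi.single T 1)

/-- The pseudo-derivative `∂̂f(S)/∂̂z_T`. -/
noncomputable def pdhat (z : Finset α → ℝ) (S T : Finset α) : ℝ :=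
  if S ⊆ T then 1
  else if S ∩ T = ∅ then 0
  else (∑ E ∈ (crossers S).attach, z E.1 * pdhat z (S \ E.1) T
        + fval z (S \ T) - ∑ E ∈ univ.filter (fun E => S ⊆ E), z E)
       / (∑ E ∈ crossers S, z E)
termination_by S.card
decreasing_by exact card_sdiff_lt_of_mem_crossers E.2

/-- The `m`-th harmonic number. -/
noncomputable def harm (m : ℕ) : ℝ := ∑ j ∈ Finset.range m, 1 / ((j : ℝ) + 1)

/-!
Scale the weights of the sets through `p` by `t ∈ [0, 1]`. At `t = 0` every set through `p` has
weight zero, so `f` vanishes on every `S ∋ p`, in particular on `U`. Along the path the weights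
stay nonnegative, and they stay nondegenerate because the sets avoiding `p` already cross every
`S`. By the chain rule the derivative of `t ↦ f(U)` is `∑_{T ∋ p} z_T ∂f(U)/∂z_T ≤ β ℓ(p)`, and the
mean value theorem gives `f(U) ≤ β ℓ(p)`.
-/

theorem ContinuousLinearMap.apply_le_mul_sum_of_apply_single_le {ι : Type*} [Fintype ι]
    [DecidableEq ι] (D : (ι → ℝ) →L[ℝ] ℝ) {v : ι → ℝ} (hv : ∀ i, 0 ≤ v i) {β : ℝ}
    (hD : ∀ i, v i ≠ 0 → D (Pi.single i 1) ≤ β) : D v ≤ β * ∑ i, v i := by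
  have hexpand : D v = ∑ i, v i * D (Pi.single i 1) := by
    conv_lhs => rw [← LinearMap.sum_single_apply (v := v)]
    simp only [map_sum]
    refine sum_congr rfl fun i _ => ?_
    rw [← smul_eq_mul, ← map_smul, ← Pi.single_smul', smul_eq_mul, mul_one]
  rw [hexpand, mul_sum]
  refine sum_le_sum fun i _ => ?_
  rcases (hv i).eq_or_lt with h | h
  · simp [← h]
  · rw [mul_comm β]
    exact mul_le_mul_of_nonneg_left (hD i h.ne') h.le

lemma sdiff_ssubset_of_mem_crossers {E S : Finset α} (h : E ∈ crossers S) : S \ E ⊂ S := by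
  obtain ⟨x, hx⟩ := (mem_filter.mp h).2.1
  exact (ssubset_iff_of_subset sdiff_subset).mpr ⟨x, (mem_inter.mp hx).1,
    fun hmem => (mem_sdiff.mp hmem).2 (mem_inter.mp hx).2⟩

lemma fval_of_card_le_one (z : Finset α → ℝ) {S : Finset α} (hS : S.card ≤ 1) :
    fval z S = ∑ q ∈ S, ell z q := by
  rw [fval, if_pos hS]

lemma fval_of_crossers_pos {z : Finset α → ℝ} {S : Finset α} (hS : 2 ≤ S.card)
    (hz : 0 < ∑ E ∈ crossers S, z E) :
    fval z S = (∑ E ∈ (crossers S).attach, z E.1 * fval z (S \ E.1)) / ∑ E ∈ crossers S, z E := by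
  rw [fval, if_neg (by omega), if_pos hz]

lemma differentiableAt_fval (S : Finset α) {w : Finset α → ℝ} (hw : Nondeg w) :
    DifferentiableAt ℝ (fun z : Finset α → ℝ => fval z S) w := by
  induction S using Finset.strongInduction with
  | _ S IH =>
    by_cases hS : S.card ≤ 1
    · simp only [fval_of_card_le_one _ hS, ell]
      fun_prop
    · have hden : 0 < ∑ E ∈ crossers S, w E := hw S (by omega)
      have hopen : IsOpen {z : Finset α → ℝ | 0 < ∑ E ∈ crossers S, z E} :=
        isOpen_lt continuous_const (by fun_prop)
      have hev : (fun z : Finset α → ℝ => fval z S) =ᶠ[nhds w]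
          fun z => (∑ E ∈ (crossers S).attach, z E.1 * fval z (S \ E.1)) /
            ∑ E ∈ crossers S, z E := by
        filter_upwards [hopen.mem_nhds hden] with z hz
        exact fval_of_crossers_pos (by omega) hz
      rw [hev.differentiableAt_iff]
      have hsub : ∀ E ∈ (crossers S).attach,
          DifferentiableAt ℝ (fun z : Finset α → ℝ => fval z (S \ E.1)) w :=
        fun E _ => IH _ (sdiff_ssubset_of_mem_crossers E.2)
      have hnum : DifferentiableAt ℝ
          (fun z : Finset α → ℝ => ∑ E ∈ (crossers S).attach, z E.1 * fval z (S \ E.1)) w :=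
        DifferentiableAt.fun_sum fun E hE => (differentiableAt_apply E.1 w).mul (hsub E hE)
      simp only [div_eq_mul_inv]
      exact hnum.mul (DifferentiableAt.inv (by fun_prop) hden.ne')

lemma fval_eq_zero_of_mem {p : α} {w : Finset α → ℝ} (hw : ∀ E : Finset α, p ∈ E → w E = 0)
    {S : Finset α} (hpS : p ∈ S) : fval w S = 0 := by
  induction S using Finset.strongInduction with
  | _ S IH =>
    by_cases hS : S.card ≤ 1
    · have hell : ell w p = 0 := sum_eq_zero fun E hE => hw E (mem_filter.mp hE).2
      rw [fval_of_card_le_one _ hS]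
      exact sum_eq_zero fun q hq => card_le_one.mp hS q hq p hpS ▸ hell
    · rw [fval, if_neg hS]
      split_ifs
      · refine div_eq_zero_iff.mpr (Or.inl (sum_eq_zero fun E _ => ?_))
        by_cases hpE : p ∈ E.1
        · rw [hw E.1 hpE, zero_mul]
        · rw [IH _ (sdiff_ssubset_of_mem_crossers E.2) (mem_sdiff.mpr ⟨hpS, hpE⟩), mul_zero]
      · rfl

section scaleThrough

variable {ι : Type*} [DecidableEq ι]

def scaleThrough (p : ι) (t : ℝ) (z : Finset ι → ℝ) : Finset ι → ℝ :=
  fun E => if p ∈ E then t * z E else z E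

lemma scaleThrough_one (p : ι) (z : Finset ι → ℝ) : scaleThrough p 1 z = z := by
  funext E
  simp [scaleThrough]

lemma scaleThrough_nonneg {p : ι} {t : ℝ} (ht : 0 ≤ t) {z : Finset ι → ℝ} (hz : ∀ E, 0 ≤ z E)
    (E : Finset ι) : 0 ≤ scaleThrough p t z E := by
  unfold scaleThrough
  split_ifs
  exacts [mul_nonneg ht (hz E), hz E]

lemma hasDerivAt_scaleThrough [Fintype ι] (p : ι) (z : Finset ι → ℝ) (t : ℝ) :
    HasDerivAt (fun t => scaleThrough p t z) (fun E => if p ∈ E then z E else 0) t := by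
  refine hasDerivAt_pi.mpr fun E => ?_
  by_cases hpE : p ∈ E
  · simpa [scaleThrough, hpE] using (hasDerivAt_id t).mul_const (z E)
  · simpa [scaleThrough, hpE] using hasDerivAt_const t (z E)

end scaleThrough

lemma fval_scaleThrough_zero {p : α} (z : Finset α → ℝ) {S : Finset α} (hpS : p ∈ S) :
    fval (scaleThrough p 0 z) S = 0 :=
  fval_eq_zero_of_mem (fun E hpE => by simp [scaleThrough, hpE]) hpS

lemma nondeg_scaleThrough {p : α} {t : ℝ} (ht : 0 ≤ t) {z : Finset α → ℝ} (hz : ∀ E, 0 ≤ z E)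
    (hpos : ∀ S : Finset α, 2 ≤ S.card → 0 < ∑ E ∈ (crossers S).filter (fun E => p ∉ E), z E) :
    Nondeg (scaleThrough p t z) := by
  intro S hS
  calc 0 < ∑ E ∈ (crossers S).filter (fun E => p ∉ E), z E := hpos S hS
    _ = ∑ E ∈ (crossers S).filter (fun E => p ∉ E), scaleThrough p t z E :=
      sum_congr rfl fun E hE => by simp [scaleThrough, (mem_filter.mp hE).2]
    _ ≤ ∑ E ∈ crossers S, scaleThrough p t z E :=
      sum_le_sum_of_subset_of_nonneg (filter_subset _ _)
        fun E _ _ => scaleThrough_nonneg ht hz E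

theorem stmt5_general {α : Type*} [Fintype α] [DecidableEq α]
    (p : α) (β : ℝ)
    (z : Finset α → ℝ) (hz : ∀ E : Finset α, 0 ≤ z E)
    (hpos : ∀ S : Finset α, 2 ≤ S.card →
      0 < ∑ E ∈ (crossers S).filter (fun E => p ∉ E), z E)
    (hderiv : ∀ w : Finset α → ℝ, (∀ E : Finset α, 0 ≤ w E) → Nondeg w →
      ∀ T : Finset α, p ∈ T → pderivf Finset.univ T w ≤ β) :
    fval z Finset.univ ≤ β * ell z p := by
  set v : Finset α → ℝ := fun E => if p ∈ E then z E else 0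
  set D : ℝ → (Finset α → ℝ) →L[ℝ] ℝ := fun t =>
    fderiv ℝ (fun w : Finset α → ℝ => fval w univ) (scaleThrough p t z)
  have hγ : ∀ t ∈ Set.Icc (0 : ℝ) 1,
      HasDerivAt (fun t => fval (scaleThrough p t z) univ) (D t v) t := fun t ht =>
    (differentiableAt_fval univ (nondeg_scaleThrough ht.1 hz hpos)).hasFDerivAt.comp_hasDerivAt
      (f := fun t => scaleThrough p t z) t (hasDerivAt_scaleThrough p z t)
  have hslope : ∀ t ∈ Set.Icc (0 : ℝ) 1, D t v ≤ β * ell z p := by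
    intro t ht
    rw [ell, sum_filter]
    refine (D t).apply_le_mul_sum_of_apply_single_le (fun E => ?_) fun T hT => ?_
    · by_cases hpE : p ∈ E <;> simp [v, hpE, hz E]
    · exact hderiv _ (scaleThrough_nonneg ht.1 hz) (nondeg_scaleThrough ht.1 hz hpos) T
        (by by_contra hpT; exact hT (if_neg hpT))
  have hmvt := (convex_Icc (0 : ℝ) 1).image_sub_le_mul_sub_of_deriv_le
    (fun t ht => (hγ t ht).continuousAt.continuousWithinAt)
    (fun t ht => (hγ t (interior_subset ht)).differentiableAt.differentiableWithinAt)
    (fun t ht => (hγ t (interior_subset ht)).deriv ▸ hslope t (interior_subset ht))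
    0 (by simp) 1 (by simp) zero_le_one
  simpa [fval_scaleThrough_zero, scaleThrough_one] using hmvt

/-- if the partial derivative `∂f(U)/∂z_T` is at most `β` for every
`T ∋ p` at every nondegenerate nonnegative weight vector, then `f(U) ≤ β·ℓ(p)`. -/
theorem stmt5 {α : Type*} [Fintype α] [DecidableEq α]
    (hU : 2 ≤ Fintype.card α) (p : α) (β : ℝ) (hβ : 1 ≤ β)
    (z : Finset α → ℝ) (hz : ∀ E : Finset α, 0 ≤ z E)
    (hpos : ∀ S : Finset α, 2 ≤ S.card →
      0 < ∑ E ∈ (crossers S).filter (fun E => p ∉ E), z E)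
    (hderiv : ∀ w : Finset α → ℝ, (∀ E : Finset α, 0 ≤ w E) → Nondeg w →
      ∀ T : Finset α, p ∈ T → pderivf Finset.univ T w ≤ β) :
    fval z Finset.univ ≤ β * ell z p :=
  stmt5_general p β z hz hpos hderiv
end

section
/- Let ℓ ≥ 1, let a₁,…,a_ℓ be nonnegative reals not all zero, and let n be an integer with n ≥ ℓ + 1. Define the stretch s := (Σ_{j=1}^ℓ a_j)² / (Σ_{j=1}^ℓ a_j²) and the expected separation sep := (Σ_{j=1}^ℓ a_j² · min(j, ℓ+1−j)) / (Σ_{j=1}^ℓ a_j²). Then sep ≥ s / (8 · (1 + ln(2n/s))). -/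
/-! Every value k of the separation m_j = min(j, ℓ+1−j) is taken by at most two indices, and
1 ≤ m_j ≤ M := ⌈ℓ/2⌉. Put r = ⌊s/32⌋. The at most 2r indices with m_j ≤ r carry, by
Cauchy–Schwarz, at most a quarter of Σ a_j. On the remaining indices the weighted Cauchy–Schwarz
inequality (Σ a_j)² ≤ (Σ 1/m_j)(Σ a_j² m_j) applies, and Σ 1/m_j is at most twice the harmonic
tail Σ_{r<k≤M} 1/k ≤ 1 + log(M/(r+1)). Hence s ≤ (32/9)(1 + log(M/(r+1))) sep, and
r + 1 > s/32, 2M ≤ n turn this into the claimed bound. -/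

open Finset Real

lemma sum_Ioc_inv_le_one_add_log {r M : ℕ} (h : r ≤ M) :
    ∑ k ∈ Ioc r M, (k : ℝ)⁻¹ ≤ 1 + log M - log (r + 1) := by
  have hsplit := sum_Ioc_consecutive (fun k : ℕ => (k : ℝ)⁻¹) r.zero_le h
  have hM := harmonic_le_one_add_log M
  have hr := log_add_one_le_harmonic r
  simp only [harmonic_eq_sum_Icc, ← Icc_add_one_left_eq_Ioc, zero_add, Rat.cast_sum, Rat.cast_inv,
    Rat.cast_natCast, Nat.cast_add, Nat.cast_one] at hsplit hM hr ⊢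
  linarith

lemma sum_comp_le_mul_sum {ι κ R : Type*} [Semiring R] [PartialOrder R] [IsOrderedRing R]
    [DecidableEq κ] {s : Finset ι} {t : Finset κ} {g : ι → κ} {c : ℕ}
    (hg : ∀ i ∈ s, g i ∈ t) (hc : ∀ k ∈ t, #{i ∈ s | g i = k} ≤ c)
    {f : κ → R} (hf : ∀ k ∈ t, 0 ≤ f k) :
    ∑ i ∈ s, f (g i) ≤ c * ∑ k ∈ t, f k := by
  have himg : s.image g ⊆ t := image_subset_iff.2 hg
  rw [sum_comp, mul_sum]
  calc ∑ k ∈ s.image g, #{i ∈ s | g i = k} • f k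
      ≤ ∑ k ∈ s.image g, c * f k := sum_le_sum fun k hk => by
        rw [nsmul_eq_mul]
        exact mul_le_mul_of_nonneg_right (Nat.mono_cast (hc k (himg hk))) (hf k (himg hk))
    _ ≤ ∑ k ∈ t, c * f k :=
        sum_le_sum_of_subset_of_nonneg himg fun k hk _ => mul_nonneg c.cast_nonneg (hf k hk)

lemma sq_sum_le_sum_inv_mul_sum_mul_sq {ι : Type*} (s : Finset ι) (a w : ι → ℝ)
    (hw : ∀ i ∈ s, 0 < w i) :
    (∑ i ∈ s, a i) ^ 2 ≤ (∑ i ∈ s, (w i)⁻¹) * ∑ i ∈ s, a i ^ 2 * w i :=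
  sum_sq_le_sum_mul_sum_of_sq_le_mul s (fun i hi => (inv_pos.2 (hw i hi)).le)
    (fun i hi => mul_nonneg (sq_nonneg _) (hw i hi).le)
    (fun i hi => by rw [mul_comm (a i ^ 2), inv_mul_cancel_left₀ (hw i hi).ne'])

section SeparationBound

variable {ι : Type*} [Fintype ι] {a : ι → ℝ} {m : ι → ℕ} {M : ℕ}

lemma sq_sum_filter_le_le_two_mul_sum_sq (hm : ∀ i, 1 ≤ m i) (hfib : ∀ k, #{i | m i = k} ≤ 2)
    (r : ℕ) :
    (∑ i with m i ≤ r, a i) ^ 2 ≤ 2 * r * ∑ i, a i ^ 2 := by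
  have hcard : (#{i | m i ≤ r} : ℝ) ≤ 2 * r := by
    have := sum_comp_le_mul_sum (s := {i | m i ≤ r}) (t := Icc 1 r) (g := m) (c := 2)
      (f := fun _ => (1 : ℝ)) (fun i hi => mem_Icc.2 ⟨hm i, (mem_filter.1 hi).2⟩)
      (fun k _ => (card_le_card (filter_subset_filter _ (filter_subset _ _))).trans (hfib k))
      (fun _ _ => zero_le_one)
    simpa using this
  calc (∑ i with m i ≤ r, a i) ^ 2 ≤ #{i | m i ≤ r} * ∑ i with m i ≤ r, a i ^ 2 :=
        sq_sum_le_card_mul_sum_sq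
    _ ≤ 2 * r * ∑ i, a i ^ 2 :=
        mul_le_mul hcard (sum_le_sum_of_subset_of_nonneg (filter_subset _ _)
          fun i _ _ => sq_nonneg _) (sum_nonneg fun i _ => sq_nonneg _) (by positivity)

lemma sum_filter_lt_inv_le_two_mul_one_add_log (hm : ∀ i, m i ≤ M)
    (hfib : ∀ k, #{i | m i = k} ≤ 2) {r : ℕ} (hr : r ≤ M) :
    ∑ i with r < m i, ((m i : ℝ))⁻¹ ≤ 2 * (1 + log M - log (r + 1)) := by
  calc ∑ i with r < m i, ((m i : ℝ))⁻¹ ≤ 2 * ∑ k ∈ Ioc r M, (k : ℝ)⁻¹ := by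
        exact_mod_cast sum_comp_le_mul_sum (t := Ioc r M) (g := m) (f := fun k : ℕ => (k : ℝ)⁻¹)
          (fun i hi => mem_Ioc.2 ⟨(mem_filter.1 hi).2, hm i⟩)
          (fun k _ => (card_le_card (filter_subset_filter _ (filter_subset _ _))).trans (hfib k))
          (fun k _ => inv_nonneg.2 k.cast_nonneg)
    _ ≤ 2 * (1 + log M - log (r + 1)) := by
        gcongr
        exact sum_Ioc_inv_le_one_add_log hr

theorem sq_sum_le_one_add_log_mul_sum_sq_mul (ha : ∀ i, 0 ≤ a i) (hm1 : ∀ i, 1 ≤ m i)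
    (hmM : ∀ i, m i ≤ M) (hfib : ∀ k, #{i | m i = k} ≤ 2) {r : ℕ} (hr : r ≤ M)
    (hrQ : 32 * r * ∑ i, a i ^ 2 ≤ (∑ i, a i) ^ 2) :
    (∑ i, a i) ^ 2 ≤ 32 / 9 * (1 + log M - log (r + 1)) * ∑ i, a i ^ 2 * m i := by
  set S := ∑ i, a i
  have hS : 0 ≤ S := sum_nonneg fun i _ => ha i
  have hhead : ∑ i with m i ≤ r, a i ≤ S / 4 := by
    refine abs_le_of_sq_le_sq' ?_ (by positivity) |>.2
    nlinarith [sq_sum_filter_le_le_two_mul_sum_sq (a := a) hm1 hfib r]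
  have htail : 3 / 4 * S ≤ ∑ i with r < m i, a i := by
    have := sum_filter_add_sum_filter_not univ (fun i => m i ≤ r) a
    simp only [not_le] at this
    linarith
  have hmpos : ∀ i ∈ ({i | r < m i} : Finset ι), (0 : ℝ) < m i :=
    fun i _ => Nat.cast_pos.2 (hm1 i)
  calc S ^ 2 = 16 / 9 * (3 / 4 * S) ^ 2 := by ring
    _ ≤ 16 / 9 * ((∑ i with r < m i, ((m i : ℝ))⁻¹) * ∑ i with r < m i, a i ^ 2 * m i) := by
        gcongr
        exact (pow_le_pow_left₀ (by positivity) htail 2).trans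
          (sq_sum_le_sum_inv_mul_sum_mul_sq _ _ _ hmpos)
    _ ≤ 16 / 9 * (2 * (1 + log M - log (r + 1)) * ∑ i, a i ^ 2 * m i) := by
        have hinv := sum_filter_lt_inv_le_two_mul_one_add_log hmM hfib hr
        gcongr _ * (?_ * ?_)
        · exact (sum_nonneg fun i hi => (inv_pos.2 (hmpos i hi)).le).trans hinv
        · exact sum_le_sum_of_subset_of_nonneg (filter_subset _ _) fun i _ _ => by positivity
    _ = _ := by ring

end SeparationBound

lemma one_add_log_sub_log_le {s n M p : ℝ} (hs : 0 < s) (hsn : s ≤ n) (hM : 0 < M)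
    (hMn : 2 * M ≤ n) (hp : s < 32 * p) :
    32 / 9 * (1 + log M - log p) ≤ 8 * (1 + log (2 * n / s)) := by
  have hn : 0 < n := hs.trans_le hsn
  have hlogM : log M ≤ log n - log 2 := by
    rw [← log_div hn.ne' two_ne_zero]
    exact log_le_log hM (by linarith)
  have hlogp : log s - 5 * log 2 < log p := by
    rw [← log_rpow two_pos, ← log_div hs.ne' (by positivity)]
    exact log_lt_log (by positivity) (by norm_num; linarith)
  have hlog2 : log 2 ≤ log (2 * n / s) :=
    log_le_log two_pos ((le_div_iff₀ hs).2 (by linarith))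
  rw [log_div (by positivity) hs.ne', log_mul two_ne_zero hn.ne'] at hlog2 ⊢
  linarith [log_two_lt_d9]

/-- The paper's `min(j, ℓ+1−j)` for the interval with 0-based index `j`. -/
def separation (l : ℕ) (j : Fin l) : ℕ := min (j + 1) (l - j)

section Separation

variable {l : ℕ}

lemma one_le_separation (j : Fin l) : 1 ≤ separation l j := by
  have := j.isLt
  unfold separation
  omega

lemma separation_le (j : Fin l) : separation l j ≤ (l + 1) / 2 := by
  have := j.isLt
  unfold separation
  omega

lemma card_separation_eq_le_two (k : ℕ) : #{j | separation l j = k} ≤ 2 :=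
  calc #{j | separation l j = k} ≤ #({k - 1, l - k} : Finset ℕ) :=
        card_le_card_of_injOn (fun j => (j : ℕ))
          (fun j hj => by
            have hk : separation l j = k := (mem_filter.1 hj).2
            have := j.isLt
            simp only [separation] at hk
            simp only [coe_insert, coe_singleton, Set.mem_insert_iff, Set.mem_singleton_iff]
            omega)
          (fun _ _ _ _ h => Fin.val_injective h)
    _ ≤ 2 := card_le_two

lemma cast_separation (j : Fin l) : (separation l j : ℝ) = min ((j : ℝ) + 1) ((l : ℝ) - j) := by
  simp [separation, Nat.cast_sub j.isLt.le]

end Separation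

theorem stmt18_general (l n : ℕ) (hn : l + 1 ≤ n)
    (a : Fin l → ℝ) (ha : ∀ j, 0 ≤ a j) (hne : ∃ j, a j ≠ 0) :
    ((∑ j, a j) ^ 2 / (∑ j, (a j) ^ 2)) /
        (8 * (1 + Real.log ((2 * (n : ℝ)) / ((∑ j, a j) ^ 2 / (∑ j, (a j) ^ 2))))) ≤
      (∑ j, (a j) ^ 2 * min ((j : ℝ) + 1) ((l : ℝ) - (j : ℝ))) /
        (∑ j, (a j) ^ 2) := by
  obtain ⟨j₀, hj₀⟩ := hne
  have hQ : 0 < ∑ j, a j ^ 2 := sum_pos' (fun j _ => sq_nonneg _) ⟨j₀, mem_univ _, by positivity⟩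
  have hS : 0 < ∑ j, a j := sum_pos' (fun j _ => ha j) ⟨j₀, mem_univ _, (ha j₀).lt_of_ne' hj₀⟩
  set s := (∑ j, a j) ^ 2 / ∑ j, a j ^ 2
  have hs : 0 < s := by positivity
  have hsl : s ≤ l := by
    rw [div_le_iff₀ hQ]
    simpa using sq_sum_le_card_mul_sum_sq (s := univ) (f := a)
  set r := ⌊s / 32⌋₊
  have hr : (r : ℝ) ≤ s / 32 := Nat.floor_le (by positivity)
  have hrM : r ≤ (l + 1) / 2 := by
    have : 32 * r ≤ l := by exact_mod_cast (by linarith : (32 * r : ℝ) ≤ l)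
    omega
  have hrQ : 32 * r * ∑ j, a j ^ 2 ≤ (∑ j, a j) ^ 2 := by
    calc 32 * r * ∑ j, a j ^ 2 ≤ s * ∑ j, a j ^ 2 := by gcongr; linarith
      _ = _ := div_mul_cancel₀ _ hQ.ne'
  have hln : (l : ℝ) + 1 ≤ n := by exact_mod_cast hn
  have hnum := one_add_log_sub_log_le (n := n) (M := ((l + 1) / 2 : ℕ)) (p := r + 1) hs
    (by linarith) (Nat.cast_pos.2 (by have := j₀.isLt; omega))
    (by exact_mod_cast (by omega : 2 * ((l + 1) / 2) ≤ n))
    (by linarith [Nat.lt_floor_add_one (s / 32)])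
  have hL : 0 < 1 + log (2 * n / s) :=
    add_pos_of_pos_of_nonneg one_pos (log_nonneg ((one_le_div hs).2 (by linarith)))
  simp_rw [← cast_separation]
  rw [div_le_div_iff₀ (by positivity) hQ, div_mul_cancel₀ _ hQ.ne', mul_comm _ (8 * _)]
  calc (∑ j, a j) ^ 2 ≤ _ := sq_sum_le_one_add_log_mul_sum_sq_mul ha one_le_separation
        separation_le card_separation_eq_le_two hrM hrQ
    _ ≤ _ := by gcongr ?_ * _

/-- the stretch-versus-separation inequality
`sep ≥ s / (8 (1 + ln(2n/s)))` for nonnegative interval lengths `a₁,…,a_ℓ`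
(not all zero), where `s = (Σ aⱼ)²/(Σ aⱼ²)` and
`sep = (Σ aⱼ² · min(j, ℓ+1−j))/(Σ aⱼ²)`. -/
theorem stmt18 (l n : ℕ) (hl : 1 ≤ l) (hn : l + 1 ≤ n)
    (a : Fin l → ℝ) (ha : ∀ j, 0 ≤ a j) (hne : ∃ j, a j ≠ 0) :
    ((∑ j, a j) ^ 2 / (∑ j, (a j) ^ 2)) /
        (8 * (1 + Real.log ((2 * (n : ℝ)) / ((∑ j, a j) ^ 2 / (∑ j, (a j) ^ 2))))) ≤
      (∑ j, (a j) ^ 2 * min ((j : ℝ) + 1) ((l : ℝ) - (j : ℝ))) /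
        (∑ j, (a j) ^ 2) :=
  stmt18_general l n hn a ha hne
end

section
/- For all real numbers x > 0 and y with y = x / ln(1+x) (so automatically y ≥ 1), one has x ≤ 2y·(1 + ln y). -/
/-- if `y = x / ln(1+x)` for `x > 0`, then `x ≤ 2y(1 + ln y)`. -/
theorem stmt19 (x y : ℝ) (hx : 0 < x) (hy : y = x / Real.log (1 + x)) :
    x ≤ 2 * y * (1 + Real.log y) := by
  have h1x : (1:ℝ) < 1 + x := by linarith
  have hL : 0 < Real.log (1 + x) := Real.log_pos h1x
  set L := Real.log (1 + x) with hLdef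
  have hLx : L ≤ x := by
    have := Real.log_le_sub_one_of_pos (by linarith : (0:ℝ) < 1 + x)
    linarith
  have hy1 : 1 ≤ y := by
    rw [hy, le_div_iff₀ hL]; linarith
  have hy0 : 0 < y := by linarith
  have hlogy : 0 ≤ Real.log y := Real.log_nonneg hy1
  have hxyL : x = y * L := by
    rw [hy]; field_simp
  rcases le_or_gt L 2 with hc | hc
  · nlinarith
  · have hx1 : 1 < x := by
      have h2 : Real.exp 2 ≤ 1 + x := by
        calc Real.exp 2 ≤ Real.exp L := Real.exp_le_exp.mpr hc.le
          _ = 1 + x := Real.exp_log (by linarith)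
      nlinarith [Real.add_one_le_exp (2:ℝ)]
    -- log L ≤ L / 2
    have hsL : 0 < Real.sqrt L := Real.sqrt_pos.mpr hL
    have hsq : Real.sqrt L ^ 2 = L := Real.sq_sqrt hL.le
    have hlogL : Real.log L ≤ L / 2 := by
      have h1 : Real.log L = 2 * Real.log (Real.sqrt L) := by
        nth_rewrite 1 [← hsq]
        rw [Real.log_pow]; push_cast; ring
      have h2 : Real.log (Real.sqrt L) ≤ Real.sqrt L - 1 :=
        Real.log_le_sub_one_of_pos hsL
      nlinarith [sq_nonneg (Real.sqrt L - 2)]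
    -- L ≤ 1 + log x
    have hle : L ≤ 1 + Real.log x := by
      have he : (2:ℝ) < Real.exp 1 := by
        nlinarith [Real.exp_one_gt_d9]
      have h1 : 1 + x ≤ Real.exp 1 * x := by nlinarith
      calc L ≤ Real.log (Real.exp 1 * x) :=
              Real.log_le_log (by linarith) h1
        _ = 1 + Real.log x := by
              rw [Real.log_mul (Real.exp_pos 1).ne' hx.ne', Real.log_exp]
    have hylog : Real.log y = Real.log x - Real.log L := by
      rw [hy, Real.log_div hx.ne' hL.ne']
    have key : 0 ≤ 2 + 2 * Real.log x - 2 * Real.log L - L := by linarith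
    nlinarith [mul_nonneg hy0.le key]
end
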